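/- Let I be a finite set, n ≥ 2, m ≥ 1. Suppose for each user u ∈ {1,…,m} and position k ∈ {1,…,n+1} items are drawn independently with item at position k distributed according to a pmf p_k on I. Let ω_k := k^β/∑_{k'=2}^n (k')^β and define the empirical training target distribution p̂(y) := (1/m)∑_{u}∑_{k=2}^n ω_k 1[item_{u,k} = y]. Then with probability at least 0.99, TV(p̂, p_{n+1}) ≤ ∑_{k=2}^n ω_k·TV(p_k, p_{n+1}) + C·|I|·sqrt( log(|I|)·(∑_{k=2}^n ω_k²) / m ) for some absolute constant C. -/

import Mathlib

open MeasureTheory ProbabilityTheory Finset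

/-!
The empirical target `p̂` is an unbiased estimator of the mixture `q = ∑ₖ ωₖ pₖ`, so the triangle
inequality splits `TV(p̂, p_{n+1})` into the bias `TV(q, p_{n+1})`, which convexity of `TV` bounds
by `∑ₖ ωₖ TV(pₖ, p_{n+1})`, and the fluctuation `TV(p̂, q)`. Since the draws are pairwise
independent, `∑_y Var p̂(y) ≤ ∑ₖ ωₖ² / m`, so by Markov's inequality
`∑_y (p̂(y) - q(y))² < 100 ∑ₖ ωₖ² / m` with probability at least `0.99`, and Cauchy–Schwarz turns
this into `TV(p̂, q) ≤ 5 √(|I| ∑ₖ ωₖ² / m)`. For `|I| ≥ 2` this is at most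
`5 |I| √(log |I| ∑ₖ ωₖ² / m)`; for `|I| ≤ 1` any two distributions on `I` coincide.
-/

section TotalVariation

variable {I : Type*} [Fintype I]

noncomputable def tvDist (a b : I → ℝ) : ℝ := (1 / 2) * ∑ y, |a y - b y|

lemma tvDist_nonneg (a b : I → ℝ) : 0 ≤ tvDist a b := by
  unfold tvDist
  positivity

lemma tvDist_triangle (a b c : I → ℝ) : tvDist a c ≤ tvDist a b + tvDist b c := by
  unfold tvDist
  rw [← mul_add, ← sum_add_distrib]
  gcongr with y
  exact abs_sub_le _ _ _

lemma tvDist_eq_zero_of_subsingleton [Subsingleton I] {a b : I → ℝ}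
    (h : ∑ y, a y = ∑ y, b y) : tvDist a b = 0 := by
  cases isEmpty_or_nonempty I with
  | inl _ => simp [tvDist]
  | inr _ =>
    obtain ⟨y₀⟩ := ‹Nonempty I›
    have huniv : (univ : Finset I) = {y₀} :=
      eq_singleton_iff_unique_mem.mpr ⟨mem_univ _, fun y _ => Subsingleton.elim y y₀⟩
    simp_all [tvDist]

lemma tvDist_mixture_le {κ : Type*} {s : Finset κ} {w : κ → ℝ} (hw : ∀ k ∈ s, 0 ≤ w k)
    (hw1 : ∑ k ∈ s, w k = 1) (P : κ → I → ℝ) (r : I → ℝ) :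
    tvDist (fun y => ∑ k ∈ s, w k * P k y) r ≤ ∑ k ∈ s, w k * tvDist (P k) r := by
  have hdiff : ∀ y, ∑ k ∈ s, w k * P k y - r y = ∑ k ∈ s, w k * (P k y - r y) := by
    intro y
    simp only [mul_sub, sum_sub_distrib, ← sum_mul, hw1, one_mul]
  calc tvDist (fun y => ∑ k ∈ s, w k * P k y) r
      ≤ (1 / 2) * ∑ y, ∑ k ∈ s, w k * |P k y - r y| := by
        unfold tvDist
        gcongr with y
        rw [hdiff]
        refine (abs_sum_le_sum_abs _ _).trans_eq (sum_congr rfl fun k hk => ?_)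
        rw [abs_mul, abs_of_nonneg (hw k hk)]
    _ = ∑ k ∈ s, w k * tvDist (P k) r := by
        simp only [tvDist, sum_comm (s := univ), mul_sum]
        exact sum_congr rfl fun k _ => sum_congr rfl fun y _ => by ring

lemma tvDist_le_sqrt_card_mul_sum_sq (a b : I → ℝ) :
    tvDist a b ≤ (1 / 2) * √(Fintype.card I * ∑ y, (a y - b y) ^ 2) := by
  unfold tvDist
  gcongr
  apply Real.le_sqrt_of_sq_le
  simpa using sq_sum_le_card_mul_sum_sq (s := univ) (f := fun y => |a y - b y|)

end TotalVariation

lemma sqrt_mul_le_mul_sqrt_log_mul {c x : ℝ} (hc : 2 ≤ c) (hx : 0 ≤ x) :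
    √(c * x) ≤ c * √(Real.log c * x) := by
  have hlog : 1 / 2 ≤ Real.log c :=
    (by linarith [Real.log_two_gt_d9] : 1 / 2 ≤ Real.log 2).trans
      (Real.log_le_log (by norm_num) hc)
  have hclog : 1 ≤ c * Real.log c := by nlinarith
  calc √(c * x) ≤ √(c ^ 2 * (Real.log c * x)) := by
        apply Real.sqrt_le_sqrt
        nlinarith [mul_nonneg (mul_nonneg (by linarith : 0 ≤ c) (sub_nonneg.mpr hclog)) hx]
    _ = c * √(Real.log c * x) := by
      rw [Real.sqrt_mul (sq_nonneg c), Real.sqrt_sq (by linarith)]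

section Probability

variable {Ω : Type*} [MeasurableSpace Ω] {μ : Measure Ω}

theorem meas_sum_sq_sub_integral_ge_le [IsFiniteMeasure μ] {ι : Type*} {s : Finset ι}
    {X : ι → Ω → ℝ} (hX : ∀ i ∈ s, MemLp (X i) 2 μ) {c : ℝ} (hc : 0 < c) :
    μ {ω | c ≤ ∑ i ∈ s, (X i ω - μ[X i]) ^ 2} ≤
      ENNReal.ofReal ((∑ i ∈ s, Var[X i; μ]) / c) := by
  have hint : ∀ i ∈ s, Integrable (fun ω => (X i ω - μ[X i]) ^ 2) μ := fun i hi =>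
    ((hX i hi).sub (memLp_const _)).integrable_sq
  have hmarkov := mul_meas_ge_le_integral_of_nonneg
    (ae_of_all μ fun ω => sum_nonneg fun i _ => sq_nonneg (X i ω - μ[X i]))
    (integrable_finsetSum s hint) c
  rw [integral_finsetSum s hint] at hmarkov
  rw [← ofReal_measureReal]
  refine ENNReal.ofReal_le_ofReal ((le_div_iff₀' hc).mpr ?_)
  refine hmarkov.trans_eq (sum_congr rfl fun i hi => ?_)
  rw [variance_eq_integral (hX i hi).aestronglyMeasurable.aemeasurable]

lemma one_sub_le_prob_lt [IsProbabilityMeasure μ] {f : Ω → ℝ} (hf : AEMeasurable f μ) {t : ℝ}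
    {ε : ENNReal} (h : μ {ω | t ≤ f ω} ≤ ε) : 1 - ε ≤ μ {ω | f ω < t} := by
  have hcompl : {ω | f ω < t} = {ω | t ≤ f ω}ᶜ := by
    ext ω
    simp
  rw [hcompl, prob_compl_eq_one_sub₀ (nullMeasurableSet_le aemeasurable_const hf)]
  exact tsub_le_tsub_left h 1

variable {I : Type*} [DecidableEq I] [MeasurableSpace I] [MeasurableSingletonClass I]

lemma measurable_ite_eq {X : Ω → I} (hX : Measurable X) (y : I) :
    Measurable fun ω => if X ω = y then (1 : ℝ) else 0 :=
  Measurable.ite (hX (measurableSet_singleton y)) measurable_const measurable_const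

lemma memLp_ite_eq [IsFiniteMeasure μ] {X : Ω → I} (hX : Measurable X) (y : I) (p : ENNReal) :
    MemLp (fun ω => if X ω = y then (1 : ℝ) else 0) p μ :=
  MemLp.of_bound (measurable_ite_eq hX y).aestronglyMeasurable 1
    (ae_of_all μ fun ω => by split_ifs <;> simp)

lemma integral_ite_eq {X : Ω → I} (hX : Measurable X) (y : I) :
    μ[fun ω => if X ω = y then (1 : ℝ) else 0] = μ.real {ω | X ω = y} := by
  change _ = μ.real (X ⁻¹' {y})
  rw [← integral_indicator_one (hX (measurableSet_singleton y))]
  congr 1 with ω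
  by_cases h : X ω = y <;> simp [h]

lemma sum_variance_ite_eq_le_one [Fintype I] [IsProbabilityMeasure μ] {X : Ω → I}
    (hX : Measurable X) :
    ∑ y, Var[fun ω => if X ω = y then (1 : ℝ) else 0; μ] ≤ 1 := by
  calc ∑ y, Var[fun ω => if X ω = y then (1 : ℝ) else 0; μ]
      ≤ ∑ y, μ[fun ω => (if X ω = y then (1 : ℝ) else 0) ^ 2] :=
        sum_le_sum fun y _ =>
          variance_le_expectation_sq (measurable_ite_eq hX y).aestronglyMeasurable
    _ = 1 := by
        rw [← integral_finsetSum _ fun y _ => (memLp_ite_eq hX y 2).integrable_sq]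
        simp

end Probability

section EmpiricalTarget

noncomputable def empiricalTarget {Ω I κ : Type*} [DecidableEq I] (m : ℕ) (s : Finset κ)
    (w : κ → ℝ) (item : Fin m → κ → Ω → I) (ω : Ω) (y : I) : ℝ :=
  (1 / m) * ∑ u, ∑ k ∈ s, w k * if item u k ω = y then 1 else 0

variable {Ω I κ : Type*} [DecidableEq I] {m : ℕ} {s : Finset κ} {w : κ → ℝ}
  {item : Fin m → κ → Ω → I}

lemma sum_empiricalTarget [Fintype I] (hm : m ≠ 0) (hw1 : ∑ k ∈ s, w k = 1) (ω : Ω) :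
    ∑ y, empiricalTarget m s w item ω y = 1 := by
  simp only [empiricalTarget, ← mul_sum, sum_comm (s := (univ : Finset I)), sum_ite_eq,
    mem_univ, if_true, mul_one, hw1, sum_const, card_univ, Fintype.card_fin, nsmul_eq_mul]
  field_simp

lemma empiricalTarget_eq_sum (ω : Ω) (y : I) :
    empiricalTarget m s w item ω y =
      ∑ a ∈ univ ×ˢ s, w a.2 / m * if item a.1 a.2 ω = y then 1 else 0 := by
  simp only [empiricalTarget, sum_product, mul_sum]
  exact sum_congr rfl fun u _ => sum_congr rfl fun k _ => by ring

variable [MeasurableSpace Ω] {μ : Measure Ω} [MeasurableSpace I] [MeasurableSingletonClass I]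

lemma memLp_empiricalTarget [IsFiniteMeasure μ] (hmeas : ∀ u, ∀ k ∈ s, Measurable (item u k))
    (y : I) : MemLp (fun ω => empiricalTarget m s w item ω y) 2 μ :=
  (memLp_finsetSum _ fun u _ => memLp_finsetSum _ fun k hk =>
    (memLp_ite_eq (hmeas u k hk) y 2).const_mul _).const_mul _

lemma integral_empiricalTarget [IsFiniteMeasure μ] (hm : m ≠ 0)
    (hmeas : ∀ u, ∀ k ∈ s, Measurable (item u k)) {p : κ → I → ℝ}
    (hlaw : ∀ u, ∀ k ∈ s, ∀ y, μ.real {ω | item u k ω = y} = p k y) (y : I) :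
    μ[fun ω => empiricalTarget m s w item ω y] = ∑ k ∈ s, w k * p k y := by
  have hint : ∀ u, ∀ k ∈ s,
      Integrable (fun ω => w k * if item u k ω = y then (1 : ℝ) else 0) μ := fun u k hk =>
    ((memLp_ite_eq (hmeas u k hk) y 1).integrable le_rfl).const_mul _
  have hterm : ∀ u, ∀ k ∈ s,
      μ[fun ω => w k * if item u k ω = y then (1 : ℝ) else 0] = w k * p k y := fun u k hk => by
    rw [integral_const_mul, integral_ite_eq (hmeas u k hk), hlaw u k hk y]
  unfold empiricalTarget
  rw [integral_const_mul, integral_finsetSum _ fun u _ => integrable_finsetSum _ (hint u),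
    sum_congr rfl fun u _ => (integral_finsetSum _ (hint u)).trans (sum_congr rfl (hterm u))]
  simp only [sum_const, card_univ, Fintype.card_fin, nsmul_eq_mul]
  field_simp

lemma variance_empiricalTarget [IsFiniteMeasure μ] (hmeas : ∀ u, ∀ k ∈ s, Measurable (item u k))
    (hindep : ((univ ×ˢ s : Finset (Fin m × κ)) : Set (Fin m × κ)).Pairwise
      fun a b => IndepFun (item a.1 a.2) (item b.1 b.2) μ) (y : I) :
    Var[fun ω => empiricalTarget m s w item ω y; μ] =
      ∑ a ∈ univ ×ˢ s,
        (w a.2 / m) ^ 2 * Var[fun ω => if item a.1 a.2 ω = y then (1 : ℝ) else 0; μ] := by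
  have hfun : (fun ω => empiricalTarget m s w item ω y) =
      ∑ a ∈ univ ×ˢ s, fun ω => w a.2 / m * if item a.1 a.2 ω = y then (1 : ℝ) else 0 := by
    ext ω
    rw [empiricalTarget_eq_sum, Finset.sum_apply]
  rw [hfun, IndepFun.variance_sum]
  · exact sum_congr rfl fun a _ => variance_const_mul _ _ _
  · exact fun a ha => (memLp_ite_eq (hmeas a.1 a.2 (mem_product.mp ha).2) y 2).const_mul _
  · intro a ha b hb hab
    exact (hindep ha hb hab).comp ((measurable_ite_eq measurable_id y).const_mul _)
      ((measurable_ite_eq measurable_id y).const_mul _)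

lemma sum_variance_empiricalTarget_le [Fintype I] [IsProbabilityMeasure μ]
    (hmeas : ∀ u, ∀ k ∈ s, Measurable (item u k))
    (hindep : ((univ ×ˢ s : Finset (Fin m × κ)) : Set (Fin m × κ)).Pairwise
      fun a b => IndepFun (item a.1 a.2) (item b.1 b.2) μ) :
    ∑ y, Var[fun ω => empiricalTarget m s w item ω y; μ] ≤ (∑ k ∈ s, w k ^ 2) / m := by
  simp only [variance_empiricalTarget hmeas hindep]
  rw [sum_comm]
  calc ∑ a ∈ univ ×ˢ s, ∑ y,
        (w a.2 / m) ^ 2 * Var[fun ω => if item a.1 a.2 ω = y then (1 : ℝ) else 0; μ]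
      ≤ ∑ a ∈ univ ×ˢ s, (w a.2 / m) ^ 2 := by
        refine sum_le_sum fun a ha => ?_
        rw [← mul_sum]
        exact mul_le_of_le_one_right (sq_nonneg _)
          (sum_variance_ite_eq_le_one (hmeas a.1 a.2 (mem_product.mp ha).2))
    _ = (∑ k ∈ s, w k ^ 2) / m := by
        simp only [sum_product, sum_const, card_univ, Fintype.card_fin, nsmul_eq_mul, div_pow,
          ← sum_div]
        rcases eq_or_ne m 0 with rfl | hm
        · simp
        · field_simp

end EmpiricalTarget

section Concentration

variable {Ω I κ : Type*} [MeasurableSpace Ω] {μ : Measure Ω} [IsProbabilityMeasure μ]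
  [Fintype I] [DecidableEq I] [MeasurableSpace I] [MeasurableSingletonClass I]
  {m : ℕ} {s : Finset κ} {w : κ → ℝ} {item : Fin m → κ → Ω → I} {p : κ → I → ℝ}

theorem prob_tvDist_empiricalTarget_le (hm : m ≠ 0) (hw : ∀ k ∈ s, 0 ≤ w k)
    (hw1 : ∑ k ∈ s, w k = 1) (hmeas : ∀ u, ∀ k ∈ s, Measurable (item u k))
    (hlaw : ∀ u, ∀ k ∈ s, ∀ y, μ.real {ω | item u k ω = y} = p k y)
    (hindep : ((univ ×ˢ s : Finset (Fin m × κ)) : Set (Fin m × κ)).Pairwise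
      fun a b => IndepFun (item a.1 a.2) (item b.1 b.2) μ) (r : I → ℝ) :
    ENNReal.ofReal 0.99 ≤ μ {ω | tvDist (empiricalTarget m s w item ω) r ≤
      ∑ k ∈ s, w k * tvDist (p k) r + 5 * √(Fintype.card I * (∑ k ∈ s, w k ^ 2) / m)} := by
  set W := ∑ k ∈ s, w k ^ 2
  set q : I → ℝ := fun y => ∑ k ∈ s, w k * p k y
  set dev : Ω → ℝ := fun ω => ∑ y, (empiricalTarget m s w item ω y - q y) ^ 2
  have hW : 0 < W := by
    have := sq_sum_le_card_mul_sum_sq (s := s) (f := w)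
    rw [hw1, one_pow] at this
    exact pos_of_mul_pos_right (one_pos.trans_le this) (Nat.cast_nonneg _)
  have ht : 0 < 100 * (W / m) := by positivity
  have hbad : μ {ω | 100 * (W / m) ≤ dev ω} ≤ ENNReal.ofReal (1 / 100) := by
    have := meas_sum_sq_sub_integral_ge_le (μ := μ) (s := univ)
      (fun y _ => memLp_empiricalTarget (w := w) hmeas y) ht
    simp only [integral_empiricalTarget hm hmeas hlaw] at this
    refine this.trans (ENNReal.ofReal_le_ofReal ?_)
    rw [div_le_iff₀ ht]
    linarith [sum_variance_empiricalTarget_le (w := w) hmeas hindep]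
  have hphat := fun y => (memLp_empiricalTarget (μ := μ) (w := w) hmeas y).aemeasurable
  have hdev : AEMeasurable dev μ := by fun_prop
  have h99 : ENNReal.ofReal 0.99 = 1 - ENNReal.ofReal (1 / 100) := by
    rw [← ENNReal.ofReal_one, ← ENNReal.ofReal_sub _ (by norm_num)]
    norm_num
  rw [h99]
  refine (one_sub_le_prob_lt hdev hbad).trans (measure_mono fun ω (hω : dev ω < _) => ?_)
  calc tvDist (empiricalTarget m s w item ω) r
      ≤ tvDist (empiricalTarget m s w item ω) q + tvDist q r := tvDist_triangle _ _ _
    _ ≤ (1 / 2) * √(Fintype.card I * (100 * (W / m))) + ∑ k ∈ s, w k * tvDist (p k) r := by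
        gcongr
        · exact (tvDist_le_sqrt_card_mul_sum_sq _ _).trans (by gcongr)
        · exact tvDist_mixture_le hw hw1 p r
    _ = _ := by
        rw [show (Fintype.card I : ℝ) * (100 * (W / m)) = 10 ^ 2 * (Fintype.card I * W / m) by
          ring, Real.sqrt_mul (by norm_num), Real.sqrt_sq (by norm_num)]
        ring

theorem prob_tvDist_empiricalTarget_le_log (hm : m ≠ 0) (hw : ∀ k ∈ s, 0 ≤ w k)
    (hw1 : ∑ k ∈ s, w k = 1) (hmeas : ∀ u, ∀ k ∈ s, Measurable (item u k))
    (hlaw : ∀ u, ∀ k ∈ s, ∀ y, μ.real {ω | item u k ω = y} = p k y)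
    (hindep : ((univ ×ˢ s : Finset (Fin m × κ)) : Set (Fin m × κ)).Pairwise
      fun a b => IndepFun (item a.1 a.2) (item b.1 b.2) μ) {r : I → ℝ} (hr : ∑ y, r y = 1) :
    ENNReal.ofReal 0.99 ≤ μ {ω | tvDist (empiricalTarget m s w item ω) r ≤
      ∑ k ∈ s, w k * tvDist (p k) r +
        5 * Fintype.card I * √(Real.log (Fintype.card I) * (∑ k ∈ s, w k ^ 2) / m)} := by
  have hbias : 0 ≤ ∑ k ∈ s, w k * tvDist (p k) r :=
    sum_nonneg fun k hk => mul_nonneg (hw k hk) (tvDist_nonneg _ _)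
  rcases le_or_gt (Fintype.card I) 1 with hI | hI
  · have : Subsingleton I := Fintype.card_le_one_iff_subsingleton.mp hI
    refine (ENNReal.ofReal_le_one.mpr (by norm_num)).trans
      (measure_univ.symm.trans_le (measure_mono fun ω _ => ?_))
    change tvDist _ r ≤ _
    rw [tvDist_eq_zero_of_subsingleton ((sum_empiricalTarget hm hw1 ω).trans hr.symm)]
    positivity
  · refine (prob_tvDist_empiricalTarget_le hm hw hw1 hmeas hlaw hindep r).trans
      (measure_mono (Set.ofPred_subset_ofPred.mpr fun ω hω => hω.trans ?_))
    have hc : (2 : ℝ) ≤ Fintype.card I := by exact_mod_cast hI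
    rw [mul_assoc 5, mul_div_assoc, mul_div_assoc]
    gcongr
    exact sqrt_mul_le_mul_sqrt_log_mul hc (by positivity)

end Concentration

/-- Theorem 2 of the paper (generalized target-distribution bound).
There is an absolute constant `C > 0` such that: for any finite item set `I`,
`n ≥ 2`, `m ≥ 1` users whose items at positions `1,…,n+1` are drawn
independently with the item at position `k` distributed as the pmf `p k`,
the GenPAS empirical training target distribution
`p̂(y) = (1/m)∑_u ∑_{k=2}^n ω_k 1[item_{u,k} = y]` with
`ω_k = k^β/∑_{k'=2}^n (k')^β` satisfies, with probability at least 0.99,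
`TV(p̂, p_{n+1}) ≤ ∑_k ω_k TV(p_k, p_{n+1}) + C·|I|·sqrt(log|I|·(∑_k ω_k²)/m)`. -/
theorem genpas_target_distribution_bound :
    ∃ C : ℝ, 0 < C ∧
      ∀ (I : Type) [Fintype I] [DecidableEq I]
        [mI : MeasurableSpace I] [MeasurableSingletonClass I]
        (Ω : Type) [MeasurableSpace Ω]
        (μ : Measure Ω) [IsProbabilityMeasure μ]
        (n m : ℕ), 2 ≤ n → 1 ≤ m →
      ∀ (β : ℝ) (item : Fin m → ℕ → Ω → I) (p : ℕ → I → ℝ),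
        (∀ u k, Measurable (item u k)) →
        (∀ k ∈ Finset.Icc 1 (n + 1), (∀ y, 0 ≤ p k y) ∧ ∑ y, p k y = 1) →
        (∀ u : Fin m, ∀ k ∈ Finset.Icc 1 (n + 1), ∀ y : I,
          μ {ω | item u k ω = y} = ENNReal.ofReal (p k y)) →
        iIndepFun
          (fun uk : Fin m × {k : ℕ // k ∈ Finset.Icc 1 (n + 1)} =>
            fun ω => item uk.1 uk.2 ω) μ →
        ENNReal.ofReal 0.99 ≤
          μ {ω |
            (1 / 2) * ∑ y : I,
              |((1 : ℝ) / m) * (∑ u : Fin m, ∑ k ∈ Finset.Icc 2 n,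
                  ((k : ℝ) ^ β / ∑ k' ∈ Finset.Icc 2 n, (k' : ℝ) ^ β) *
                    (if item u k ω = y then (1 : ℝ) else 0))
                - p (n + 1) y| ≤
            (∑ k ∈ Finset.Icc 2 n,
              ((k : ℝ) ^ β / ∑ k' ∈ Finset.Icc 2 n, (k' : ℝ) ^ β) *
                ((1 / 2) * ∑ y : I, |p k y - p (n + 1) y|)) +
            C * (Fintype.card I : ℝ) *
              Real.sqrt (Real.log (Fintype.card I) *
                (∑ k ∈ Finset.Icc 2 n,
                  ((k : ℝ) ^ β / ∑ k' ∈ Finset.Icc 2 n, (k' : ℝ) ^ β) ^ 2) / m)} := by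
  refine ⟨5, by norm_num, ?_⟩
  intro I _ _ _ _ Ω _ μ _ n m hn hm β item p hmeas hpmf hlaw hindep
  have hsub : Icc 2 n ⊆ Icc 1 (n + 1) := Icc_subset_Icc (by norm_num) (by omega)
  have hpow : ∀ k ∈ Icc 2 n, 0 < (k : ℝ) ^ β := fun k hk =>
    Real.rpow_pos_of_pos (by have := (mem_Icc.mp hk).1; positivity) β
  have hS : 0 < ∑ k ∈ Icc 2 n, (k : ℝ) ^ β := sum_pos hpow ⟨2, mem_Icc.mpr ⟨le_rfl, hn⟩⟩
  refine prob_tvDist_empiricalTarget_le_log (by omega)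
    (fun k hk => div_nonneg (hpow k hk).le hS.le) (by rw [← sum_div, div_self hS.ne'])
    (fun u k _ => hmeas u k) (fun u k hk y => ?_) ?_
    (hpmf (n + 1) (mem_Icc.mpr ⟨by omega, le_rfl⟩)).2
  · rw [measureReal_def, hlaw u k (hsub hk) y,
      ENNReal.toReal_ofReal ((hpmf k (hsub hk)).1 y)]
  · intro a ha b hb hab
    exact hindep.indepFun (i := (a.1, ⟨a.2, hsub (mem_product.mp ha).2⟩))
      (j := (b.1, ⟨b.2, hsub (mem_product.mp hb).2⟩)) (by simpa [Prod.ext_iff] using hab)
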